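/- arXiv:math/0512461 — 4 statements merged into one kernel-verified Lean document; each statement's English description precedes it below -/
import Mathlib

section
/- Let u be a smooth 2π-periodic function on ℝ. Then ‖u‖_{L⁶(0,2π)}³ ≤ ‖u‖_{L²(0,2π)}² · ( ‖u'‖_{L²(0,2π)} + (1/(2π))‖u‖_{L²(0,2π)} ). -/
open Real MeasureTheory intervalIntegral

lemma cs_interval (f g : ℝ → ℝ) (hf : Continuous f) (hg : Continuous g)
    (hfn : ∀ x, 0 ≤ f x) (hgn : ∀ x, 0 ≤ g x) (a b : ℝ) (hab : a ≤ b) :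
    ∫ x in a..b, f x * g x ≤
      Real.sqrt (∫ x in a..b, f x ^ 2) * Real.sqrt (∫ x in a..b, g x ^ 2) := by
  rw [intervalIntegral.integral_of_le hab, intervalIntegral.integral_of_le hab,
    intervalIntegral.integral_of_le hab]
  set μ := volume.restrict (Set.Ioc a b) with hμ
  haveI : IsFiniteMeasure μ := by
    constructor
    rw [hμ, Measure.restrict_apply_univ, Real.volume_Ioc]
    exact ENNReal.ofReal_lt_top
  have hmem : ∀ (F : ℝ → ℝ), Continuous F → MemLp F (ENNReal.ofReal 2) μ := by
    intro F hF
    obtain ⟨C, hC⟩ : ∃ C, ∀ x ∈ Set.Icc a b, ‖F x‖ ≤ C :=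
      (isCompact_Icc).exists_bound_of_continuousOn hF.continuousOn
    refine MemLp.of_bound hF.aestronglyMeasurable C ?_
    filter_upwards [ae_restrict_mem measurableSet_Ioc] with x hx
    exact hC x (Set.Ioc_subset_Icc_self hx)
  have hpq : Real.HolderConjugate 2 2 := Real.HolderConjugate.two_two
  have := integral_mul_le_Lp_mul_Lq_of_nonneg (μ := μ) hpq
    (Filter.Eventually.of_forall hfn) (Filter.Eventually.of_forall hgn) (hmem f hf) (hmem g hg)
  calc ∫ x, f x * g x ∂μ
      ≤ (∫ x, f x ^ (2:ℝ) ∂μ) ^ ((1:ℝ)/2) * (∫ x, g x ^ (2:ℝ) ∂μ) ^ ((1:ℝ)/2) := this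
    _ = Real.sqrt (∫ x, f x ^ 2 ∂μ) * Real.sqrt (∫ x, g x ^ 2 ∂μ) := by
        simp only [Real.rpow_two, Real.sqrt_eq_rpow]

/-- Gagliardo–Nirenberg type inequality on the torus `𝕋 = ℝ/2πℤ`:
`‖u‖_{L⁶}³ ≤ ‖u‖_{L²}² (‖u'‖_{L²} + (2π)⁻¹ ‖u‖_{L²})`. -/
theorem gagliardo_nirenberg_periodic (u : ℝ → ℂ)
    (hu : ContDiff ℝ (⊤ : ℕ∞) u) (hper : ∀ x, u (x + 2 * π) = u x) :
    (∫ x in (0:ℝ)..(2 * π), ‖u x‖ ^ 6) ^ ((1:ℝ)/2) ≤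
      (∫ x in (0:ℝ)..(2 * π), ‖u x‖ ^ 2) *
        ((∫ x in (0:ℝ)..(2 * π), ‖deriv u x‖ ^ 2) ^ ((1:ℝ)/2)
          + (1 / (2 * π)) * (∫ x in (0:ℝ)..(2 * π), ‖u x‖ ^ 2) ^ ((1:ℝ)/2)) := by
  have hπ : (0:ℝ) < π := Real.pi_pos
  have h2π : (0:ℝ) < 2 * π := by positivity
  have hc : Continuous u := hu.continuous
  have hc' : Continuous (deriv u) := hu.continuous_deriv (by simp)
  have hdiff : Differentiable ℝ u := hu.differentiable (by simp)
  set g : ℝ → ℝ := fun t => ‖u t‖ ^ 2 with hgdef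
  set p : ℝ → ℝ := fun t => 2 * (inner ℝ (u t) (deriv u t) : ℝ) with hpdef
  have hcp : Continuous p := continuous_const.mul (hc.inner hc')
  have hgc : Continuous g := (hc.norm).pow 2
  have ii : ∀ (F : ℝ → ℝ), Continuous F → ∀ a b : ℝ, IntervalIntegrable F volume a b :=
    fun F hF a b => hF.intervalIntegrable a b
  have hderiv : ∀ t : ℝ, HasDerivAt g (p t) t := by
    intro t
    have h1 : HasDerivAt u (deriv u t) t := (hdiff t).hasDerivAt
    have h2 : HasDerivAt (fun s : ℝ => (inner ℝ (u s) (u s) : ℝ))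
        ((inner ℝ (u t) (deriv u t) : ℝ) + inner ℝ (deriv u t) (u t)) t := HasDerivAt.inner ℝ h1 h1
    have h3 : (fun s : ℝ => (inner ℝ (u s) (u s) : ℝ)) = g := by
      funext s; simp [hgdef, real_inner_self_eq_norm_sq]
    rw [h3] at h2
    convert h2 using 1
    rw [hpdef]
    have := real_inner_comm (deriv u t) (u t)
    simp only []
    linarith
  have hpbound : ∀ t, |p t| ≤ 2 * (‖u t‖ * ‖deriv u t‖) := by
    intro t
    rw [hpdef]
    calc |2 * (inner ℝ (u t) (deriv u t) : ℝ)| = 2 * |(inner ℝ (u t) (deriv u t) : ℝ)| := by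
          rw [abs_mul, abs_two]
      _ ≤ 2 * (‖u t‖ * ‖deriv u t‖) := by
          have := abs_real_inner_le_norm (u t) (deriv u t); linarith
  set K := ∫ t in (0:ℝ)..(2*π), |p t| with hKdef
  have hgper : g (2*π) = g 0 := by
    have := hper 0
    rw [zero_add] at this
    simp [hgdef, this]
  have hftc : ∀ a b : ℝ, g b - g a = ∫ t in a..b, p t := fun a b =>
    (intervalIntegral.integral_eq_sub_of_hasDerivAt (fun t _ => hderiv t) (ii p hcp a b)).symm
  have habs : ∀ a b : ℝ, a ≤ b → |∫ t in a..b, p t| ≤ ∫ t in a..b, |p t| :=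
    fun a b hab => intervalIntegral.abs_integral_le_integral_abs hab
  have hsplit : ∀ c d : ℝ, c ≤ d →
      (∫ t in (0:ℝ)..c, |p t|) + (∫ t in c..d, |p t|) + (∫ t in d..(2*π), |p t|) = K := by
    intro c d _
    rw [intervalIntegral.integral_add_adjacent_intervals (ii _ hcp.abs 0 c) (ii _ hcp.abs c d),
      intervalIntegral.integral_add_adjacent_intervals (ii _ hcp.abs 0 d) (ii _ hcp.abs d (2*π))]
  have key : ∀ x ∈ Set.Icc (0:ℝ) (2*π), ∀ y ∈ Set.Icc (0:ℝ) (2*π), g x ≤ g y + K / 2 := by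
    intro x hx y hy
    rcases le_total y x with hyx | hxy
    · have e1 : g x - g y ≤ ∫ t in y..x, |p t| := by
        rw [hftc y x]; exact le_trans (le_abs_self _) (habs y x hyx)
      have a1 := hftc 0 y
      have a2 := hftc x (2*π)
      rw [hgper] at a2
      have e2 : g x - g y ≤ (∫ t in (0:ℝ)..y, |p t|) + ∫ t in x..(2*π), |p t| := by
        have b1 : -(∫ t in (0:ℝ)..y, p t) ≤ ∫ t in (0:ℝ)..y, |p t| :=
          le_trans (neg_le_abs _) (habs 0 y hy.1)
        have b2 : -(∫ t in x..(2*π), p t) ≤ ∫ t in x..(2*π), |p t| :=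
          le_trans (neg_le_abs _) (habs x (2*π) hx.2)
        linarith
      have := hsplit y x hyx
      linarith
    · have e1 : g x - g y ≤ ∫ t in x..y, |p t| := by
        have : g x - g y = -(∫ t in x..y, p t) := by
          have := hftc x y; linarith
        rw [this]; exact le_trans (neg_le_abs _) (habs x y hxy)
      have a1 := hftc 0 x
      have a2 := hftc y (2*π)
      rw [hgper] at a2
      have e2 : g x - g y ≤ (∫ t in (0:ℝ)..x, |p t|) + ∫ t in y..(2*π), |p t| := by
        have b1 : (∫ t in (0:ℝ)..x, p t) ≤ ∫ t in (0:ℝ)..x, |p t| :=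
          le_trans (le_abs_self _) (habs 0 x hx.1)
        have b2 : (∫ t in y..(2*π), p t) ≤ ∫ t in y..(2*π), |p t| :=
          le_trans (le_abs_self _) (habs y (2*π) hy.2)
        linarith
      have := hsplit x y hxy
      linarith
  set M := ∫ x in (0:ℝ)..(2*π), ‖u x‖ ^ 2 with hMdef
  set A := ∫ x in (0:ℝ)..(2*π), ‖deriv u x‖ ^ 2 with hAdef
  have hMnn : 0 ≤ M := intervalIntegral.integral_nonneg h2π.le (fun x _ => by positivity)
  have hAnn : 0 ≤ A := intervalIntegral.integral_nonneg h2π.le (fun x _ => by positivity)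
  have havg : ∀ x ∈ Set.Icc (0:ℝ) (2*π), g x ≤ M / (2*π) + K / 2 := by
    intro x hx
    have hmono : (∫ _ in (0:ℝ)..(2*π), g x) ≤ ∫ y in (0:ℝ)..(2*π), (g y + K / 2) :=
      intervalIntegral.integral_mono_on h2π.le (intervalIntegrable_const)
        ((ii g hgc 0 (2*π)).add intervalIntegrable_const) (fun y hy => key x hx y hy)
    rw [intervalIntegral.integral_const,
      intervalIntegral.integral_add (ii g hgc 0 (2*π)) intervalIntegrable_const,
      intervalIntegral.integral_const] at hmono
    have hMg : (∫ y in (0:ℝ)..(2*π), g y) = M := rfl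
    rw [hMg] at hmono
    simp only [smul_eq_mul, sub_zero] at hmono
    rw [show M / (2*π) + K / 2 = (M + 2*π*(K/2)) / (2*π) by field_simp,
      le_div_iff₀ h2π]
    linarith
  have hKQ : K ≤ 2 * ∫ t in (0:ℝ)..(2*π), ‖u t‖ * ‖deriv u t‖ := by
    have : K ≤ ∫ t in (0:ℝ)..(2*π), 2 * (‖u t‖ * ‖deriv u t‖) :=
      intervalIntegral.integral_mono_on h2π.le (ii _ hcp.abs 0 (2*π))
        (ii _ (continuous_const.mul (hc.norm.mul hc'.norm)) 0 (2*π))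
        (fun t _ => hpbound t)
    rwa [intervalIntegral.integral_const_mul] at this
  have hQ : (∫ t in (0:ℝ)..(2*π), ‖u t‖ * ‖deriv u t‖) ≤ Real.sqrt M * Real.sqrt A :=
    cs_interval (fun t => ‖u t‖) (fun t => ‖deriv u t‖) hc.norm hc'.norm
      (fun t => norm_nonneg _) (fun t => norm_nonneg _) 0 (2*π) h2π.le
  set B := M / (2*π) + Real.sqrt M * Real.sqrt A with hBdef
  have hBnn : 0 ≤ B := by
    have := Real.sqrt_nonneg M
    have := Real.sqrt_nonneg A
    have : 0 ≤ M / (2*π) := div_nonneg hMnn h2π.le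
    positivity
  have hBg : ∀ x ∈ Set.Icc (0:ℝ) (2*π), g x ≤ B := by
    intro x hx
    have := havg x hx
    rw [hBdef]
    linarith
  have h6 : (∫ x in (0:ℝ)..(2*π), ‖u x‖ ^ 6) ≤ B ^ 2 * M := by
    have hmono : (∫ x in (0:ℝ)..(2*π), ‖u x‖ ^ 6) ≤
        ∫ x in (0:ℝ)..(2*π), B ^ 2 * ‖u x‖ ^ 2 := by
      refine intervalIntegral.integral_mono_on h2π.le (ii _ (hc.norm.pow 6) 0 (2*π))
        (ii _ (continuous_const.mul (hc.norm.pow 2)) 0 (2*π)) (fun x hx => ?_)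
      have h1 : g x ≤ B := hBg x hx
      have h0 : 0 ≤ g x := by positivity
      have : ‖u x‖ ^ 6 = (g x) ^ 2 * ‖u x‖ ^ 2 := by rw [hgdef]; ring
      rw [this]
      have : (g x) ^ 2 ≤ B ^ 2 := by nlinarith
      nlinarith [sq_nonneg ‖u x‖]
    rwa [intervalIntegral.integral_const_mul] at hmono
  have hL6nn : 0 ≤ ∫ x in (0:ℝ)..(2*π), ‖u x‖ ^ 6 :=
    intervalIntegral.integral_nonneg h2π.le (fun x _ => by positivity)
  rw [← Real.sqrt_eq_rpow, ← Real.sqrt_eq_rpow, ← Real.sqrt_eq_rpow]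
  calc Real.sqrt (∫ x in (0:ℝ)..(2*π), ‖u x‖ ^ 6)
      ≤ Real.sqrt (B ^ 2 * M) := Real.sqrt_le_sqrt h6
    _ = B * Real.sqrt M := by
        rw [Real.sqrt_mul (sq_nonneg B), Real.sqrt_sq hBnn]
    _ = M * (Real.sqrt A + 1 / (2*π) * Real.sqrt M) := by
        have hss : Real.sqrt M * Real.sqrt M = M := Real.mul_self_sqrt hMnn
        rw [hBdef]
        field_simp
        linear_combination (2*π) * Real.sqrt A * hss
end

section
/- Let f, g be smooth 2π-periodic functions with g(ξ) = 0 for some ξ ∈ [0,2π]. Then ‖fg‖_{L²(0,2π)} ≤ (1/2) ‖f‖_{L²(0,2π)} ‖g'‖_{L¹(0,2π)}. -/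
open Real MeasureTheory intervalIntegral

/-- If `g` is a smooth `2π`-periodic function vanishing at some point of `[0,2π]`, then
`‖fg‖_{L²} ≤ (1/2) ‖f‖_{L²} ‖g'‖_{L¹}` on `(0,2π)`. -/
theorem product_L2_bound (f g : ℝ → ℂ)
    (hf : ContDiff ℝ (⊤ : ℕ∞) f) (hg : ContDiff ℝ (⊤ : ℕ∞) g)
    (hfper : ∀ x, f (x + 2 * π) = f x) (hgper : ∀ x, g (x + 2 * π) = g x)
    (hvanish : ∃ ξ ∈ Set.Icc (0:ℝ) (2 * π), g ξ = 0) :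
    (∫ x in (0:ℝ)..(2 * π), ‖f x * g x‖ ^ 2) ^ ((1:ℝ)/2) ≤
      (1/2) * (∫ x in (0:ℝ)..(2 * π), ‖f x‖ ^ 2) ^ ((1:ℝ)/2)
        * ∫ x in (0:ℝ)..(2 * π), ‖deriv g x‖ := by
  obtain ⟨ξ, hξ, hgξ⟩ := hvanish
  have hπ : (0:ℝ) < 2 * π := by positivity
  have hgc : Continuous g := hg.continuous
  have hfc : Continuous f := hf.continuous
  have hg' : Continuous (deriv g) := hg.continuous_deriv (by simp)
  have hgper' : Function.Periodic g (2 * π) := hgper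
  have hdper : Function.Periodic (fun x => ‖deriv g x‖) (2 * π) := by
    intro x
    simp only []
    congr 1
    have : (fun y => g (y + 2 * π)) = g := funext hgper
    calc deriv g (x + 2 * π) = deriv (fun y => g (y + 2 * π)) x := by
          rw [deriv_comp_add_const]
      _ = deriv g x := by rw [this]
  set M : ℝ := ∫ x in (0:ℝ)..(2 * π), ‖deriv g x‖ with hMdef
  have hMeq : (∫ x in ξ..(ξ + 2 * π), ‖deriv g x‖) = M := by
    have := hdper.intervalIntegral_add_eq ξ 0
    simpa using this
  have hdiff : ∀ x : ℝ, DifferentiableAt ℝ g x :=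
    fun x => (hg.differentiable (by simp)).differentiableAt
  have hgξ2 : g (ξ + 2 * π) = 0 := by rw [hgper]; exact hgξ
  -- key bound on [ξ, ξ+2π]
  have key : ∀ y ∈ Set.Icc ξ (ξ + 2 * π), 2 * ‖g y‖ ≤ M := by
    intro y hy
    have h1 : (∫ t in ξ..y, deriv g t) = g y - g ξ :=
      integral_deriv_eq_sub (fun t _ => hdiff t) (hg'.intervalIntegrable _ _)
    have h2 : (∫ t in y..(ξ + 2 * π), deriv g t) = g (ξ + 2 * π) - g y :=
      integral_deriv_eq_sub (fun t _ => hdiff t) (hg'.intervalIntegrable _ _)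
    have b1 : ‖g y‖ ≤ ∫ t in ξ..y, ‖deriv g t‖ := by
      have := intervalIntegral.norm_integral_le_integral_norm (f := deriv g) (μ := volume)
        (a := ξ) (b := y) hy.1
      rw [h1, hgξ, sub_zero] at this
      exact this
    have b2 : ‖g y‖ ≤ ∫ t in y..(ξ + 2 * π), ‖deriv g t‖ := by
      have := intervalIntegral.norm_integral_le_integral_norm (f := deriv g) (μ := volume)
        (a := y) (b := ξ + 2 * π) hy.2
      rw [h2, hgξ2, zero_sub, norm_neg] at this
      exact this
    have hadd : (∫ t in ξ..y, ‖deriv g t‖) + (∫ t in y..(ξ + 2 * π), ‖deriv g t‖)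
        = ∫ t in ξ..(ξ + 2 * π), ‖deriv g t‖ :=
      intervalIntegral.integral_add_adjacent_intervals
        ((hg'.norm).intervalIntegrable _ _) ((hg'.norm).intervalIntegrable _ _)
    rw [← hMeq, ← hadd]
    linarith
  -- bound on [0, 2π]
  have bound : ∀ x ∈ Set.Icc (0:ℝ) (2 * π), ‖g x‖ ≤ M / 2 := by
    intro x hx
    rcases le_or_gt ξ x with h | h
    · have := key x ⟨h, by linarith [hx.2, hξ.1]⟩
      linarith
    · have := key (x + 2 * π) ⟨by linarith [hx.1, hξ.2], by linarith⟩
      rw [hgper] at this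
      linarith
  have hMnonneg : 0 ≤ M := by
    apply intervalIntegral.integral_nonneg hπ.le
    intro x _; positivity
  -- pointwise square bound integrated
  have hmono : (∫ x in (0:ℝ)..(2 * π), ‖f x * g x‖ ^ 2) ≤
      ∫ x in (0:ℝ)..(2 * π), (M / 2) ^ 2 * ‖f x‖ ^ 2 := by
    apply intervalIntegral.integral_mono_on hπ.le
    · exact ((hfc.mul hgc).norm.pow 2).intervalIntegrable _ _
    · exact (continuous_const.mul (hfc.norm.pow 2)).intervalIntegrable _ _
    · intro x hx
      have hb := bound x hx
      have : ‖f x * g x‖ ^ 2 = ‖f x‖ ^ 2 * ‖g x‖ ^ 2 := by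
        rw [norm_mul]; ring
      rw [this]
      calc ‖f x‖ ^ 2 * ‖g x‖ ^ 2 ≤ ‖f x‖ ^ 2 * (M / 2) ^ 2 := by
            apply mul_le_mul_of_nonneg_left _ (by positivity)
            exact pow_le_pow_left₀ (norm_nonneg _) hb 2
        _ = (M / 2) ^ 2 * ‖f x‖ ^ 2 := by ring
  have hA : (0:ℝ) ≤ ∫ x in (0:ℝ)..(2 * π), ‖f x‖ ^ 2 := by
    apply intervalIntegral.integral_nonneg hπ.le
    intro x _; positivity
  have hL : (0:ℝ) ≤ ∫ x in (0:ℝ)..(2 * π), ‖f x * g x‖ ^ 2 := by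
    apply intervalIntegral.integral_nonneg hπ.le
    intro x _; positivity
  have hconst : (∫ x in (0:ℝ)..(2 * π), (M / 2) ^ 2 * ‖f x‖ ^ 2) =
      (M / 2) ^ 2 * ∫ x in (0:ℝ)..(2 * π), ‖f x‖ ^ 2 :=
    intervalIntegral.integral_const_mul _ _
  have step : (∫ x in (0:ℝ)..(2 * π), ‖f x * g x‖ ^ 2) ^ ((1:ℝ)/2) ≤
      ((M / 2) ^ 2 * ∫ x in (0:ℝ)..(2 * π), ‖f x‖ ^ 2) ^ ((1:ℝ)/2) := by
    apply Real.rpow_le_rpow hL _ (by norm_num)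
    rw [← hconst]; exact hmono
  calc (∫ x in (0:ℝ)..(2 * π), ‖f x * g x‖ ^ 2) ^ ((1:ℝ)/2)
      ≤ ((M / 2) ^ 2 * ∫ x in (0:ℝ)..(2 * π), ‖f x‖ ^ 2) ^ ((1:ℝ)/2) := step
    _ = (M / 2) * (∫ x in (0:ℝ)..(2 * π), ‖f x‖ ^ 2) ^ ((1:ℝ)/2) := by
        rw [Real.mul_rpow (by positivity) hA]
        congr 1
        rw [← Real.rpow_natCast (M / 2) 2, ← Real.rpow_mul (by positivity)]
        norm_num
    _ = (1/2) * (∫ x in (0:ℝ)..(2 * π), ‖f x‖ ^ 2) ^ ((1:ℝ)/2) * M := by ring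
end

section
/- For u, v ∈ L²(0,2π), defining ℐ(u)(x) = (1/(2π)) ∫₀^{2π} ∫_θ^x ( |u(y)|² − (1/(2π))‖u‖²_{L²} ) dy dθ, one has the pointwise bound ‖ℐ(u) − ℐ(v)‖_{L∞(0,2π)} ≤ 2 (‖u‖_{L²} + ‖v‖_{L²}) ‖u − v‖_{L²}. -/
open Real MeasureTheory intervalIntegral

/-! `ℐ(u)(x) - ℐ(v)(x)` is the average over `θ` of `∫_θ^x h`, where `h` is the difference of the
centred densities `‖u‖² - ⨍‖u‖²` and `‖v‖² - ⨍‖v‖²`, so it is bounded by `∫ |h|`. Removing the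
means at most doubles the `L¹` norm of `‖u‖² - ‖v‖²`, and pointwise
`|‖u‖² - ‖v‖²| ≤ (‖u‖ + ‖v‖) ‖u - v‖`, so Cauchy–Schwarz finishes. -/

/-- The mean-zero periodic primitive `ℐ(f)` of `|f|² - (1/2π)‖f‖²_{L²(𝕋)}`. -/
noncomputable def gaugePhase (f : ℝ → ℂ) (x : ℝ) : ℝ :=
  (1 / (2 * π)) * ∫ θ in (0:ℝ)..(2 * π),
    ∫ y in θ..x, (‖f y‖ ^ 2 - (1 / (2 * π)) * ∫ z in (0:ℝ)..(2 * π), ‖f z‖ ^ 2)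

section NormSq

variable {α E F : Type*} [MeasurableSpace α] {μ : Measure α}
  [NormedAddCommGroup E] [NormedAddCommGroup F]

lemma memLp_two_norm_of_integrable_norm_sq {f : α → E}
    (hf : Integrable (fun y => ‖f y‖ ^ 2) μ) : MemLp (fun y => ‖f y‖) 2 μ := by
  -- `f` need not be a.e. strongly measurable; `‖f‖` is measurable as `√(‖f‖²)`.
  refine (memLp_two_iff_integrable_sq ?_).2 hf
  exact (continuous_sqrt.comp_aestronglyMeasurable hf.aestronglyMeasurable).congr
    (.of_forall fun y => sqrt_sq (norm_nonneg _))

lemma integral_norm_mul_norm_le {f : α → E} {g : α → F}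
    (hf : Integrable (fun y => ‖f y‖ ^ 2) μ) (hg : Integrable (fun y => ‖g y‖ ^ 2) μ) :
    ∫ y, ‖f y‖ * ‖g y‖ ∂μ ≤
      (∫ y, ‖f y‖ ^ 2 ∂μ) ^ ((1:ℝ)/2) * (∫ y, ‖g y‖ ^ 2 ∂μ) ^ ((1:ℝ)/2) := by
  have h2 : ENNReal.ofReal 2 = 2 := by norm_num
  have := integral_mul_norm_le_Lp_mul_Lq HolderConjugate.two_two
    (h2 ▸ memLp_two_norm_of_integrable_norm_sq hf) (h2 ▸ memLp_two_norm_of_integrable_norm_sq hg)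
  simpa only [norm_norm, rpow_two] using this

lemma abs_norm_sq_sub_norm_sq_le (a b : E) :
    |‖a‖ ^ 2 - ‖b‖ ^ 2| ≤ ‖a‖ * ‖a - b‖ + ‖b‖ * ‖a - b‖ := by
  calc |‖a‖ ^ 2 - ‖b‖ ^ 2| = |‖a‖ - ‖b‖| * (‖a‖ + ‖b‖) := by
        rw [sq_sub_sq, abs_mul, abs_of_nonneg (by positivity : 0 ≤ ‖a‖ + ‖b‖), mul_comm]
    _ ≤ ‖a - b‖ * (‖a‖ + ‖b‖) := by gcongr; exact abs_norm_sub_norm_le a b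
    _ = ‖a‖ * ‖a - b‖ + ‖b‖ * ‖a - b‖ := by ring

lemma integral_abs_norm_sq_sub_norm_sq_le {u v : α → E}
    (hu : Integrable (fun y => ‖u y‖ ^ 2) μ) (hv : Integrable (fun y => ‖v y‖ ^ 2) μ)
    (huv : Integrable (fun y => ‖u y - v y‖ ^ 2) μ) :
    ∫ y, |‖u y‖ ^ 2 - ‖v y‖ ^ 2| ∂μ ≤
      ((∫ y, ‖u y‖ ^ 2 ∂μ) ^ ((1:ℝ)/2) + (∫ y, ‖v y‖ ^ 2 ∂μ) ^ ((1:ℝ)/2))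
        * (∫ y, ‖u y - v y‖ ^ 2 ∂μ) ^ ((1:ℝ)/2) := by
  have hw := memLp_two_norm_of_integrable_norm_sq huv
  have hu_w : Integrable (fun y => ‖u y‖ * ‖u y - v y‖) μ :=
    (memLp_two_norm_of_integrable_norm_sq hu).integrable_mul hw
  have hv_w : Integrable (fun y => ‖v y‖ * ‖u y - v y‖) μ :=
    (memLp_two_norm_of_integrable_norm_sq hv).integrable_mul hw
  calc ∫ y, |‖u y‖ ^ 2 - ‖v y‖ ^ 2| ∂μ
      ≤ ∫ y, (‖u y‖ * ‖u y - v y‖ + ‖v y‖ * ‖u y - v y‖) ∂μ :=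
        integral_mono (hu.sub hv).abs (hu_w.add hv_w) fun y => abs_norm_sq_sub_norm_sq_le _ _
    _ = ∫ y, ‖u y‖ * ‖u y - v y‖ ∂μ + ∫ y, ‖v y‖ * ‖u y - v y‖ ∂μ := integral_add hu_w hv_w
    _ ≤ _ := by
        rw [add_mul]
        exact add_le_add (integral_norm_mul_norm_le hu huv) (integral_norm_mul_norm_le hv huv)

end NormSq

section Primitive

variable {a b : ℝ} {f g : ℝ → ℝ}

lemma integral_abs_sub_mean_sub_le (hab : a ≤ b)
    (hf : IntervalIntegrable f volume a b) (hg : IntervalIntegrable g volume a b) :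
    ∫ y in a..b, |(f y - (1 / (b - a)) * ∫ z in a..b, f z)
        - (g y - (1 / (b - a)) * ∫ z in a..b, g z)|
      ≤ 2 * ∫ y in a..b, |f y - g y| := by
  set c := (1 / (b - a)) * ∫ z in a..b, (f z - g z) with hc_def
  have hmean (y : ℝ) : (f y - (1 / (b - a)) * ∫ z in a..b, f z)
      - (g y - (1 / (b - a)) * ∫ z in a..b, g z) = (f y - g y) - c := by
    rw [hc_def, integral_sub hf hg]; ring
  have hc : (b - a) * |c| ≤ ∫ y in a..b, |f y - g y| := by
    rw [abs_mul, abs_of_nonneg (by simpa using sub_nonneg.2 hab), ← mul_assoc]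
    calc (b - a) * (1 / (b - a)) * |∫ z in a..b, (f z - g z)|
        ≤ 1 * |∫ z in a..b, (f z - g z)| := by
          gcongr
          rcases hab.eq_or_lt with rfl | hlt
          · simp
          · rw [mul_one_div_cancel (sub_pos.2 hlt).ne']
      _ ≤ ∫ y in a..b, |f y - g y| := by
          rw [one_mul]; exact abs_integral_le_integral_abs hab
  simp only [hmean]
  calc _ ≤ ∫ y in a..b, (|f y - g y| + |c|) :=
        integral_mono_on hab ((hf.sub hg).sub intervalIntegrable_const).abs
          ((hf.sub hg).abs.add intervalIntegrable_const) fun y _ => abs_sub _ _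
    _ = (∫ y in a..b, |f y - g y|) + (b - a) * |c| := by
        rw [integral_add (hf.sub hg).abs intervalIntegrable_const,
          intervalIntegral.integral_const, smul_eq_mul]
    _ ≤ 2 * ∫ y in a..b, |f y - g y| := by linarith

lemma abs_integral_le_integral_abs_of_mem_Icc (hf : IntervalIntegrable f volume a b)
    {θ x : ℝ} (hθ : θ ∈ Set.Icc a b) (hx : x ∈ Set.Icc a b) :
    |∫ y in θ..x, f y| ≤ ∫ y in a..b, |f y| := by
  have hab : a ≤ b := hθ.1.trans hθ.2
  have hsub : Set.uIoc θ x ⊆ Set.Ioc a b :=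
    Set.Ioc_subset_Ioc (le_min hθ.1 hx.1) (max_le hθ.2 hx.2)
  calc |∫ y in θ..x, f y| ≤ ∫ y in Set.uIoc θ x, |f y| := by
        simpa only [Real.norm_eq_abs] using
          norm_integral_le_integral_norm_uIoc (f := f) (μ := volume)
    _ ≤ ∫ y in Set.Ioc a b, |f y| :=
        setIntegral_mono_set hf.1.abs (.of_forall fun y => abs_nonneg _) hsub.eventuallyLE
    _ = ∫ y in a..b, |f y| := (integral_of_le hab).symm

lemma intervalIntegrable_integral_of_mem_Icc (hf : IntervalIntegrable f volume a b)
    {x : ℝ} (hx : x ∈ Set.Icc a b) :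
    IntervalIntegrable (fun θ => ∫ y in θ..x, f y) volume a b := by
  have hab : a ≤ b := hx.1.trans hx.2
  have hx' : x ∈ Set.uIcc a b := by rwa [Set.uIcc_of_le hab]
  refine ContinuousOn.intervalIntegrable ?_
  exact (continuousOn_primitive_interval' hf hx').neg.congr fun θ _ => integral_symm x θ

lemma abs_integral_integral_le_mul_integral_abs (hf : IntervalIntegrable f volume a b) {x : ℝ}
    (hx : x ∈ Set.Icc a b) :
    |∫ θ in a..b, ∫ y in θ..x, f y| ≤ (b - a) * ∫ y in a..b, |f y| := by
  have hab : a ≤ b := hx.1.trans hx.2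
  have hbound (θ : ℝ) (hθ : θ ∈ Set.uIoc a b) : ‖∫ y in θ..x, f y‖ ≤ ∫ y in a..b, |f y| := by
    have hθ' := Set.uIoc_subset_uIcc hθ
    rw [Set.uIcc_of_le hab] at hθ'
    exact abs_integral_le_integral_abs_of_mem_Icc hf hθ' hx
  simpa [abs_of_nonneg (sub_nonneg.2 hab), mul_comm] using
    intervalIntegral.norm_integral_le_of_norm_le_const hbound

lemma integral_integral_sub (hf : IntervalIntegrable f volume a b)
    (hg : IntervalIntegrable g volume a b) {x : ℝ} (hx : x ∈ Set.Icc a b) :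
    ∫ θ in a..b, ∫ y in θ..x, (f y - g y) =
      (∫ θ in a..b, ∫ y in θ..x, f y) - ∫ θ in a..b, ∫ y in θ..x, g y := by
  rw [← integral_sub (intervalIntegrable_integral_of_mem_Icc hf hx)
    (intervalIntegrable_integral_of_mem_Icc hg hx)]
  have hab : a ≤ b := hx.1.trans hx.2
  have hx' : x ∈ Set.uIcc a b := by rwa [Set.uIcc_of_le hab]
  exact integral_congr fun θ hθ => integral_sub (hf.mono_set (Set.uIcc_subset_uIcc hθ hx'))
    (hg.mono_set (Set.uIcc_subset_uIcc hθ hx'))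

end Primitive

/-- Lipschitz bound `‖ℐ(u) - ℐ(v)‖_{L∞(0,2π)} ≤ 2(‖u‖_{L²} + ‖v‖_{L²})‖u - v‖_{L²}`. -/
theorem gaugePhase_lipschitz (u v : ℝ → ℂ)
    (hu : IntervalIntegrable (fun y => ‖u y‖ ^ 2) volume 0 (2 * π))
    (hv : IntervalIntegrable (fun y => ‖v y‖ ^ 2) volume 0 (2 * π))
    (huv : IntervalIntegrable (fun y => ‖u y - v y‖ ^ 2) volume 0 (2 * π)) :
    ∀ x ∈ Set.Icc (0:ℝ) (2 * π),
      |gaugePhase u x - gaugePhase v x| ≤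
        2 * ((∫ y in (0:ℝ)..(2 * π), ‖u y‖ ^ 2) ^ ((1:ℝ)/2)
              + (∫ y in (0:ℝ)..(2 * π), ‖v y‖ ^ 2) ^ ((1:ℝ)/2))
          * (∫ y in (0:ℝ)..(2 * π), ‖u y - v y‖ ^ 2) ^ ((1:ℝ)/2) := by
  intro x hx
  have hπ : (0:ℝ) < 2 * π := by positivity
  set fu : ℝ → ℝ := fun y => ‖u y‖ ^ 2 - (1 / (2 * π)) * ∫ z in (0:ℝ)..(2 * π), ‖u z‖ ^ 2
  set fv : ℝ → ℝ := fun y => ‖v y‖ ^ 2 - (1 / (2 * π)) * ∫ z in (0:ℝ)..(2 * π), ‖v z‖ ^ 2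
  have hfu : IntervalIntegrable fu volume 0 (2 * π) := hu.sub intervalIntegrable_const
  have hfv : IntervalIntegrable fv volume 0 (2 * π) := hv.sub intervalIntegrable_const
  have hdiff : gaugePhase u x - gaugePhase v x =
      (1 / (2 * π)) * ∫ θ in (0:ℝ)..(2 * π), ∫ y in θ..x, (fu y - fv y) := by
    rw [integral_integral_sub hfu hfv hx, mul_sub]
    rfl
  have hcentered := integral_abs_sub_mean_sub_le hπ.le hu hv
  have hCS := integral_abs_norm_sq_sub_norm_sq_le hu.1 hv.1 huv.1
  rw [sub_zero] at hcentered
  simp only [← integral_of_le hπ.le] at hCS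
  calc |gaugePhase u x - gaugePhase v x|
      ≤ (1 / (2 * π)) * ((2 * π - 0) * ∫ y in (0:ℝ)..(2 * π), |fu y - fv y|) := by
        rw [hdiff, abs_mul, abs_of_pos (by positivity)]
        gcongr
        exact abs_integral_integral_le_mul_integral_abs (hfu.sub hfv) hx
    _ = ∫ y in (0:ℝ)..(2 * π), |fu y - fv y| := by rw [sub_zero]; field_simp
    _ ≤ 2 * ∫ y in (0:ℝ)..(2 * π), |‖u y‖ ^ 2 - ‖v y‖ ^ 2| := hcentered
    _ ≤ _ := by rw [mul_assoc]; gcongr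
end

section
/- For complex numbers a, b, we have |e^{ia} − e^{ib}| ≤ |a − b| when a, b are real; consequently, for u, v, h ∈ L²(0,2π), ‖(e^{iℐ(u)} − e^{iℐ(v)}) h‖_{L²} ≤ 2 (‖u‖_{L²} + ‖v‖_{L²}) ‖u − v‖_{L²} ‖h‖_{L²}, where ℐ(w)(x) = (1/(2π)) ∫₀^{2π} ∫_θ^x ( |w(y)|² − (1/(2π))‖w‖²_{L²} ) dy dθ. -/
/-!
`ℐ(u) - ℐ(v)` is the mean-zero primitive of `g - ⨍ g` with `g = |u|² - |v|²`, so it is bounded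
pointwise by `2 ‖g‖_{L¹}`; and `‖g‖_{L¹} ≤ (‖u‖_{L²} + ‖v‖_{L²}) ‖u - v‖_{L²}` by
`|u|² - |v|² = (|u| + |v|)(|u| - |v|)` and Cauchy–Schwarz. Since `t ↦ e^{it}` is 1-Lipschitz, the
difference of the gauge factors is then bounded uniformly on `[0, 2π]`, and multiplying `h` by a
bounded function costs at most that bound in `L²`.
-/

open Real MeasureTheory intervalIntegral Complex

theorem norm_exp_I_mul_sub_exp_I_mul_le (a b : ℝ) :
    ‖Complex.exp (I * a) - Complex.exp (I * b)‖ ≤ |a - b| := by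
  have hfactor : Complex.exp (I * a) - Complex.exp (I * b)
      = Complex.exp (I * b) * (Complex.exp (I * ↑(a - b)) - 1) := by
    rw [mul_sub, ← Complex.exp_add]; push_cast; ring_nf
  rw [hfactor, norm_mul, mul_comm I, Complex.norm_exp_ofReal_mul_I, one_mul, ← Real.norm_eq_abs]
  exact Real.norm_exp_I_mul_ofReal_sub_one_le

theorem abs_sq_norm_sub_sq_norm_le {E : Type*} [SeminormedAddCommGroup E] (x y : E) :
    |‖x‖ ^ 2 - ‖y‖ ^ 2| ≤ (‖x‖ + ‖y‖) * ‖x - y‖ := by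
  rw [sq_sub_sq, abs_mul, abs_of_nonneg (by positivity)]
  exact mul_le_mul_of_nonneg_left (abs_norm_sub_norm_le x y) (by positivity)

section L2

variable {α E F : Type*} [MeasurableSpace α] {μ : Measure α}
  [NormedAddCommGroup E] [NormedAddCommGroup F]

theorem memLp_two_norm_of_integrable_sq_norm {f : α → E}
    (hf : Integrable (fun x => ‖f x‖ ^ 2) μ) : MemLp (fun x => ‖f x‖) 2 μ := by
  have hmeas : AEStronglyMeasurable (fun x => ‖f x‖) μ := by
    simpa [Real.sqrt_sq (norm_nonneg _)] using
      continuous_sqrt.comp_aestronglyMeasurable hf.aestronglyMeasurable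
  exact (memLp_two_iff_integrable_sq hmeas).2 hf

theorem integrable_norm_mul_norm_of_integrable_sq_norm {f : α → E} {g : α → F}
    (hf : Integrable (fun x => ‖f x‖ ^ 2) μ) (hg : Integrable (fun x => ‖g x‖ ^ 2) μ) :
    Integrable (fun x => ‖f x‖ * ‖g x‖) μ :=
  (memLp_two_norm_of_integrable_sq_norm hf).integrable_mul
    (memLp_two_norm_of_integrable_sq_norm hg)

theorem integral_norm_mul_norm_le_of_integrable_sq_norm {f : α → E} {g : α → F}
    (hf : Integrable (fun x => ‖f x‖ ^ 2) μ) (hg : Integrable (fun x => ‖g x‖ ^ 2) μ) :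
    ∫ x, ‖f x‖ * ‖g x‖ ∂μ ≤
      (∫ x, ‖f x‖ ^ 2 ∂μ) ^ ((1:ℝ)/2) * (∫ x, ‖g x‖ ^ 2 ∂μ) ^ ((1:ℝ)/2) := by
  have h2 : ENNReal.ofReal 2 = 2 := ENNReal.ofReal_ofNat 2
  have := integral_mul_norm_le_Lp_mul_Lq Real.HolderConjugate.two_two
    (h2 ▸ memLp_two_norm_of_integrable_sq_norm hf) (h2 ▸ memLp_two_norm_of_integrable_sq_norm hg)
  simpa only [norm_norm, Real.rpow_two] using this

theorem integral_abs_sq_norm_sub_sq_norm_le {u v : α → E}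
    (hu : Integrable (fun x => ‖u x‖ ^ 2) μ) (hv : Integrable (fun x => ‖v x‖ ^ 2) μ)
    (huv : Integrable (fun x => ‖u x - v x‖ ^ 2) μ) :
    ∫ x, |‖u x‖ ^ 2 - ‖v x‖ ^ 2| ∂μ ≤
      ((∫ x, ‖u x‖ ^ 2 ∂μ) ^ ((1:ℝ)/2) + (∫ x, ‖v x‖ ^ 2 ∂μ) ^ ((1:ℝ)/2))
        * (∫ x, ‖u x - v x‖ ^ 2 ∂μ) ^ ((1:ℝ)/2) := by
  have hu' := integrable_norm_mul_norm_of_integrable_sq_norm hu huv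
  have hv' := integrable_norm_mul_norm_of_integrable_sq_norm hv huv
  calc ∫ x, |‖u x‖ ^ 2 - ‖v x‖ ^ 2| ∂μ
      ≤ ∫ x, (‖u x‖ * ‖u x - v x‖ + ‖v x‖ * ‖u x - v x‖) ∂μ :=
        integral_mono_of_nonneg (.of_forall fun _ => abs_nonneg _) (hu'.add hv')
          (.of_forall fun x => (abs_sq_norm_sub_sq_norm_le (u x) (v x)).trans_eq (add_mul _ _ _))
    _ = ∫ x, ‖u x‖ * ‖u x - v x‖ ∂μ + ∫ x, ‖v x‖ * ‖u x - v x‖ ∂μ := integral_add hu' hv'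
    _ ≤ _ := by
        rw [add_mul]
        exact add_le_add (integral_norm_mul_norm_le_of_integrable_sq_norm hu huv)
          (integral_norm_mul_norm_le_of_integrable_sq_norm hv huv)

theorem integral_norm_mul_sq_rpow_le {R : Type*} [NonUnitalSeminormedRing R] {F h : α → R}
    {C : ℝ} (hC : 0 ≤ C) (hF : ∀ᵐ x ∂μ, ‖F x‖ ≤ C) (hh : Integrable (fun x => ‖h x‖ ^ 2) μ) :
    (∫ x, ‖F x * h x‖ ^ 2 ∂μ) ^ ((1:ℝ)/2) ≤ C * (∫ x, ‖h x‖ ^ 2 ∂μ) ^ ((1:ℝ)/2) := by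
  have hsq : ∫ x, ‖F x * h x‖ ^ 2 ∂μ ≤ C ^ 2 * ∫ x, ‖h x‖ ^ 2 ∂μ := by
    rw [← MeasureTheory.integral_const_mul]
    -- no measurability of `F` is required: if `F * h` is not integrable, the left side is `0`
    refine integral_mono_of_nonneg (.of_forall fun _ => by positivity) (hh.const_mul _) ?_
    filter_upwards [hF] with x hx
    calc ‖F x * h x‖ ^ 2 ≤ (‖F x‖ * ‖h x‖) ^ 2 := by gcongr; exact norm_mul_le _ _
      _ ≤ (C * ‖h x‖) ^ 2 := by gcongr
      _ = C ^ 2 * ‖h x‖ ^ 2 := mul_pow _ _ _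
  simp only [← Real.sqrt_eq_rpow]
  calc √(∫ x, ‖F x * h x‖ ^ 2 ∂μ) ≤ √(C ^ 2 * ∫ x, ‖h x‖ ^ 2 ∂μ) := Real.sqrt_le_sqrt hsq
    _ = C * √(∫ x, ‖h x‖ ^ 2 ∂μ) := by rw [Real.sqrt_mul (sq_nonneg C), Real.sqrt_sq hC]

end L2

noncomputable def meanZeroPrimitive (a b : ℝ) (g : ℝ → ℝ) (x : ℝ) : ℝ :=
  (1 / (b - a)) * ∫ θ in a..b, ∫ y in θ..x, (g y - (1 / (b - a)) * ∫ z in a..b, g z)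

theorem gaugePhase_eq_meanZeroPrimitive (f : ℝ → ℂ) :
    gaugePhase f = meanZeroPrimitive 0 (2 * π) (fun y => ‖f y‖ ^ 2) := by
  funext x
  simp only [gaugePhase, meanZeroPrimitive, sub_zero]

section MeanZeroPrimitive

variable {a b x : ℝ} {g : ℝ → ℝ}

theorem intervalIntegrable_integral_left (hg : IntervalIntegrable g volume a b)
    (hx : x ∈ Set.uIcc a b) : IntervalIntegrable (fun θ => ∫ y in θ..x, g y) volume a b := by
  simp only [integral_symm x]
  exact (continuousOn_primitive_interval' hg hx).neg.intervalIntegrable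

theorem abs_integral_le_integral_abs_of_mem_uIcc (hab : a ≤ b)
    (hg : IntervalIntegrable g volume a b) {θ : ℝ} (hθ : θ ∈ Set.uIcc a b)
    (hx : x ∈ Set.uIcc a b) : |∫ y in θ..x, g y| ≤ ∫ y in a..b, |g y| :=
  calc |∫ y in θ..x, g y| ≤ |(∫ y in θ..x, |g y|)| :=
        norm_integral_le_abs_integral_norm (f := g) (μ := volume)
    _ ≤ |(∫ y in a..b, |g y|)| :=
        abs_integral_mono_interval
          (Set.uIoc_subset_uIoc_of_uIcc_subset_uIcc (Set.uIcc_subset_uIcc hθ hx))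
          (.of_forall fun _ => abs_nonneg _) hg.abs
    _ = ∫ y in a..b, |g y| := abs_of_nonneg (integral_nonneg hab fun _ _ => abs_nonneg _)

theorem meanZeroPrimitive_sub {g₁ g₂ : ℝ → ℝ} (hg₁ : IntervalIntegrable g₁ volume a b)
    (hg₂ : IntervalIntegrable g₂ volume a b) (hx : x ∈ Set.uIcc a b) :
    meanZeroPrimitive a b g₁ x - meanZeroPrimitive a b g₂ x =
      meanZeroPrimitive a b (g₁ - g₂) x := by
  have hc (g : ℝ → ℝ) (hg : IntervalIntegrable g volume a b) :
      IntervalIntegrable (fun θ => ∫ y in θ..x, (g y - (1 / (b - a)) * ∫ z in a..b, g z))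
        volume a b :=
    intervalIntegrable_integral_left (hg.sub intervalIntegrable_const) hx
  unfold meanZeroPrimitive
  rw [← mul_sub, ← integral_sub (hc g₁ hg₁) (hc g₂ hg₂)]
  congr 1
  refine integral_congr fun θ hθ => ?_
  have hrestrict {g : ℝ → ℝ} (hg : IntervalIntegrable g volume a b) :
      IntervalIntegrable g volume θ x := hg.mono_set (Set.uIcc_subset_uIcc hθ hx)
  simp only [Pi.sub_apply]
  rw [← integral_sub ((hrestrict hg₁).sub intervalIntegrable_const)
    ((hrestrict hg₂).sub intervalIntegrable_const), integral_sub hg₁ hg₂]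
  congr 1
  funext y
  ring

theorem abs_meanZeroPrimitive_le (hab : a < b) (hg : IntervalIntegrable g volume a b)
    (hx : x ∈ Set.Icc a b) :
    |meanZeroPrimitive a b g x| ≤ 2 * ∫ y in a..b, |g y| := by
  have hx' : x ∈ Set.uIcc a b := Set.Icc_subset_uIcc hx
  set c := (1 / (b - a)) * ∫ z in a..b, g z
  have hc : |c| * (b - a) ≤ ∫ y in a..b, |g y| := by
    rw [abs_mul, abs_of_pos (one_div_pos.2 (sub_pos.2 hab)), mul_comm, ← mul_assoc,
      mul_one_div_cancel (sub_pos.2 hab).ne', one_mul]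
    exact abs_integral_le_integral_abs hab.le
  have hinner : ∀ θ ∈ Set.uIoc a b, ‖∫ y in θ..x, (g y - c)‖ ≤ 2 * ∫ y in a..b, |g y| := by
    intro θ hθ
    have hθ' : θ ∈ Set.uIcc a b := Set.uIoc_subset_uIcc hθ
    have hθx : |x - θ| ≤ b - a := by
      rw [Set.uIcc_of_le hab.le] at hθ'
      rw [abs_sub_le_iff]
      constructor <;> linarith [hx.1, hx.2, hθ'.1, hθ'.2]
    rw [integral_sub (hg.mono_set (Set.uIcc_subset_uIcc hθ' hx')) intervalIntegrable_const,
      intervalIntegral.integral_const, smul_eq_mul, Real.norm_eq_abs]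
    calc |(∫ y in θ..x, g y) - (x - θ) * c|
        ≤ |∫ y in θ..x, g y| + |x - θ| * |c| := by rw [← abs_mul]; exact abs_sub _ _
      _ ≤ (∫ y in a..b, |g y|) + (b - a) * |c| := by
          gcongr
          exact abs_integral_le_integral_abs_of_mem_uIcc hab.le hg hθ' hx'
      _ ≤ 2 * ∫ y in a..b, |g y| := by linarith
  have houter := norm_integral_le_of_norm_le_const hinner
  rw [Real.norm_eq_abs, abs_of_pos (sub_pos.2 hab)] at houter
  rw [meanZeroPrimitive, abs_mul, abs_of_pos (one_div_pos.2 (sub_pos.2 hab))]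
  calc 1 / (b - a) * |∫ θ in a..b, ∫ y in θ..x, (g y - c)|
      ≤ 1 / (b - a) * (2 * (∫ y in a..b, |g y|) * (b - a)) := by gcongr
    _ = 2 * ∫ y in a..b, |g y| := by
        rw [one_div, inv_mul_eq_div, mul_div_cancel_right₀ _ (sub_pos.2 hab).ne']

end MeanZeroPrimitive

section GaugePhase

variable {u v : ℝ → ℂ}

theorem abs_gaugePhase_sub_le (hu : IntervalIntegrable (fun y => ‖u y‖ ^ 2) volume 0 (2 * π))
    (hv : IntervalIntegrable (fun y => ‖v y‖ ^ 2) volume 0 (2 * π)) {x : ℝ}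
    (hx : x ∈ Set.Icc 0 (2 * π)) :
    |gaugePhase u x - gaugePhase v x| ≤ 2 * ∫ y in (0:ℝ)..(2 * π), |‖u y‖ ^ 2 - ‖v y‖ ^ 2| := by
  rw [gaugePhase_eq_meanZeroPrimitive, gaugePhase_eq_meanZeroPrimitive,
    meanZeroPrimitive_sub hu hv (Set.Icc_subset_uIcc hx)]
  exact abs_meanZeroPrimitive_le two_pi_pos (hu.sub hv) hx

theorem norm_exp_gaugePhase_sub_le
    (hu : IntervalIntegrable (fun y => ‖u y‖ ^ 2) volume 0 (2 * π))
    (hv : IntervalIntegrable (fun y => ‖v y‖ ^ 2) volume 0 (2 * π))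
    (huv : IntervalIntegrable (fun y => ‖u y - v y‖ ^ 2) volume 0 (2 * π)) {x : ℝ}
    (hx : x ∈ Set.Icc 0 (2 * π)) :
    ‖Complex.exp (I * gaugePhase u x) - Complex.exp (I * gaugePhase v x)‖ ≤
      2 * ((∫ y in Set.Ioc 0 (2 * π), ‖u y‖ ^ 2) ^ ((1:ℝ)/2)
        + (∫ y in Set.Ioc 0 (2 * π), ‖v y‖ ^ 2) ^ ((1:ℝ)/2))
        * (∫ y in Set.Ioc 0 (2 * π), ‖u y - v y‖ ^ 2) ^ ((1:ℝ)/2) := by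
  have h2π : (0:ℝ) ≤ 2 * π := two_pi_pos.le
  calc ‖Complex.exp (I * gaugePhase u x) - Complex.exp (I * gaugePhase v x)‖
      ≤ |gaugePhase u x - gaugePhase v x| := norm_exp_I_mul_sub_exp_I_mul_le _ _
    _ ≤ 2 * ∫ y in (0:ℝ)..(2 * π), |‖u y‖ ^ 2 - ‖v y‖ ^ 2| := abs_gaugePhase_sub_le hu hv hx
    _ ≤ _ := by
        rw [mul_assoc, integral_of_le h2π]
        gcongr
        rw [intervalIntegrable_iff_integrableOn_Ioc_of_le h2π] at hu hv huv
        exact integral_abs_sq_norm_sub_sq_norm_le hu hv huv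

end GaugePhase

/-- `|e^{ia} - e^{ib}| ≤ |a - b|` for real `a, b`, and the resulting `L²` estimate
for the difference of gauge factors. -/
theorem exp_gauge_estimate :
    (∀ a b : ℝ, ‖Complex.exp (Complex.I * a) - Complex.exp (Complex.I * b)‖ ≤ |a - b|) ∧
    ∀ u v h : ℝ → ℂ,
      IntervalIntegrable (fun y => ‖u y‖ ^ 2) volume 0 (2 * π) →
      IntervalIntegrable (fun y => ‖v y‖ ^ 2) volume 0 (2 * π) →
      IntervalIntegrable (fun y => ‖u y - v y‖ ^ 2) volume 0 (2 * π) →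
      IntervalIntegrable (fun y => ‖h y‖ ^ 2) volume 0 (2 * π) →
      (∫ x in (0:ℝ)..(2 * π),
          ‖(Complex.exp (Complex.I * gaugePhase u x)
              - Complex.exp (Complex.I * gaugePhase v x)) * h x‖ ^ 2) ^ ((1:ℝ)/2) ≤
        2 * ((∫ y in (0:ℝ)..(2 * π), ‖u y‖ ^ 2) ^ ((1:ℝ)/2)
              + (∫ y in (0:ℝ)..(2 * π), ‖v y‖ ^ 2) ^ ((1:ℝ)/2))
          * (∫ y in (0:ℝ)..(2 * π), ‖u y - v y‖ ^ 2) ^ ((1:ℝ)/2)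
          * (∫ y in (0:ℝ)..(2 * π), ‖h y‖ ^ 2) ^ ((1:ℝ)/2) := by
  refine ⟨norm_exp_I_mul_sub_exp_I_mul_le, fun u v h hu hv huv hh => ?_⟩
  have h2π : (0:ℝ) ≤ 2 * π := two_pi_pos.le
  have hgauge : ∀ᵐ x ∂volume.restrict (Set.Ioc 0 (2 * π)),
      ‖Complex.exp (I * gaugePhase u x) - Complex.exp (I * gaugePhase v x)‖ ≤ _ :=
    (ae_restrict_mem measurableSet_Ioc).mono fun x hx =>
      norm_exp_gaugePhase_sub_le hu hv huv (Set.Ioc_subset_Icc_self hx)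
  rw [intervalIntegrable_iff_integrableOn_Ioc_of_le h2π] at hh
  simp only [integral_of_le h2π]
  exact integral_norm_mul_sq_rpow_le (by positivity) hgauge hh
end
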